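/- arXiv:1809.00943 — 3 statements merged into one kernel-verified Lean document; each statement's English description precedes it below -/
import Mathlib

section
/- If a normal modal logic L is locally tabular and enjoys the Lyndon interpolation property (LIP), then L enjoys the uniform Lyndon interpolation property (ULIP). -/
/-- Modal formulas: propositional variables, ⊥, →, □. -/
inductive Formula : Type
  | var : ℕ → Formula
  | bot : Formula
  | imp : Formula → Formula → Formula
  | box : Formula → Formula
  deriving DecidableEq

namespace Formula

def neg (φ : Formula) : Formula := φ.imp bot

def top : Formula := neg bot

def and (φ ψ : Formula) : Formula := (φ.imp ψ.neg).neg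

def iff (φ ψ : Formula) : Formula := (φ.imp ψ).and (ψ.imp φ)

def dia (φ : Formula) : Formula := φ.neg.box.neg

/-- Variables occurring positively (`true`) / negatively (`false`). -/
def vsgn : Formula → Bool → Finset ℕ
  | var p, true => {p}
  | var _, false => ∅
  | bot, _ => ∅
  | imp φ ψ, b => vsgn φ (!b) ∪ vsgn ψ b
  | box φ, b => vsgn φ b

def vpos (φ : Formula) : Finset ℕ := vsgn φ true
def vneg (φ : Formula) : Finset ℕ := vsgn φ false
def vars (φ : Formula) : Finset ℕ := vpos φ ∪ vneg φ

/-- Modal depth. -/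
def depth : Formula → ℕ
  | var _ => 0
  | bot => 0
  | imp φ ψ => max (depth φ) (depth ψ)
  | box φ => depth φ + 1

/-- Uniform substitution. -/
def subst (σ : ℕ → Formula) : Formula → Formula
  | var p => σ p
  | bot => bot
  | imp φ ψ => (subst σ φ).imp (subst σ ψ)
  | box φ => (subst σ φ).box

/-- The set of subformulas. -/
def subfmls : Formula → Finset Formula
  | var p => {var p}
  | bot => {bot}
  | imp φ ψ => insert (imp φ ψ) (subfmls φ ∪ subfmls ψ)
  | box φ => insert (box φ) (subfmls φ)

/-- n(φ) = |{ψ : □ψ ∈ Sub(φ)}|. -/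
def boxCount (φ : Formula) : ℕ :=
  ((subfmls φ).filter fun ψ => box ψ ∈ subfmls φ).card

/-- The translation ⋆ : p⋆ = p, ⊥⋆ = ⊥, (φ→ψ)⋆ = φ⋆→ψ⋆, (□φ)⋆ = φ⋆ ∧ □φ⋆. -/
def star : Formula → Formula
  | var p => var p
  | bot => bot
  | imp φ ψ => (star φ).imp (star ψ)
  | box φ => (star φ).and (star φ).box

end Formula

/-- Propositional tautology: true under every valuation treating variables and
boxed formulas as atoms. -/
def Tautology (φ : Formula) : Prop :=
  ∀ v : Formula → Bool, v .bot = false →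
    (∀ ψ θ : Formula, v (ψ.imp θ) = (!v ψ || v θ)) → v φ = true

/-- A normal modal logic: contains all tautologies and □(p→q)→(□p→□q), and is
closed under modus ponens, necessitation and uniform substitution. -/
structure IsNormal (L : Set Formula) : Prop where
  taut : ∀ φ, Tautology φ → φ ∈ L
  axK : ((Formula.var 0).imp (Formula.var 1)).box.imp
      ((Formula.var 0).box.imp (Formula.var 1).box) ∈ L
  mp : ∀ φ ψ : Formula, φ.imp ψ ∈ L → φ ∈ L → ψ ∈ L
  nec : ∀ φ : Formula, φ ∈ L → φ.box ∈ L
  subst_mem : ∀ φ ∈ L, ∀ σ : ℕ → Formula, Formula.subst σ φ ∈ L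

/-- The least normal modal logic including `X`. -/
def NormalExt (X : Set Formula) : Set Formula :=
  ⋂₀ {L : Set Formula | IsNormal L ∧ X ⊆ L}

/-- The least normal modal logic K. -/
def TheoryK : Set Formula := NormalExt ∅

def axT : Formula := (Formula.var 0).box.imp (Formula.var 0)
def ax4 : Formula := (Formula.var 0).box.imp (Formula.var 0).box.box
def axB : Formula := (Formula.var 0).imp (Formula.var 0).dia.box
def axD : Formula := Formula.bot.box.neg
def axGL : Formula := ((Formula.var 0).box.imp (Formula.var 0)).box.imp (Formula.var 0).box
def axGrz : Formula :=
  (((Formula.var 0).imp (Formula.var 0).box).box.imp (Formula.var 0)).box.imp (Formula.var 0)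

def TheoryKD : Set Formula := NormalExt {axD}
def TheoryKT : Set Formula := NormalExt {axT}
def TheoryKB : Set Formula := NormalExt {axB}
def TheoryKDB : Set Formula := NormalExt {axD, axB}
def TheoryKTB : Set Formula := NormalExt {axT, axB}
def TheoryK4 : Set Formula := NormalExt {ax4}
def TheoryS4 : Set Formula := NormalExt {axT, ax4}
def TheoryGL : Set Formula := NormalExt {axGL}
def TheoryGrz : Set Formula := NormalExt {axGrz}

/-- L⋆ := {φ : L ⊢ φ⋆}. -/
def starLogic (L : Set Formula) : Set Formula := {φ | Formula.star φ ∈ L}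

/-- θ is a uniform Lyndon interpolant of (φ, P, Q) in L. -/
def IsULInterpolant (L : Set Formula) (φ : Formula) (P Q : Finset ℕ) (θ : Formula) : Prop :=
  θ.vpos ⊆ φ.vpos \ P ∧ θ.vneg ⊆ φ.vneg \ Q ∧ φ.imp θ ∈ L ∧
    ∀ ψ : Formula, ψ.vpos ∩ P = ∅ → ψ.vneg ∩ Q = ∅ → φ.imp ψ ∈ L → θ.imp ψ ∈ L

/-- The uniform Lyndon interpolation property. -/
def ULIP (L : Set Formula) : Prop :=
  ∀ (φ : Formula) (P Q : Finset ℕ), ∃ θ : Formula, IsULInterpolant L φ P Q θ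

/-- The uniform interpolation property. -/
def UIP (L : Set Formula) : Prop :=
  ∀ (φ : Formula) (P : Finset ℕ), ∃ θ : Formula,
    θ.vars ⊆ φ.vars \ P ∧ φ.imp θ ∈ L ∧
      ∀ ψ : Formula, ψ.vars ∩ P = ∅ → φ.imp ψ ∈ L → θ.imp ψ ∈ L

/-- The Lyndon interpolation property. -/
def LIP (L : Set Formula) : Prop :=
  ∀ φ ψ : Formula, φ.imp ψ ∈ L → ∃ θ : Formula,
    θ.vpos ⊆ φ.vpos ∩ ψ.vpos ∧ θ.vneg ⊆ φ.vneg ∩ ψ.vneg ∧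
      φ.imp θ ∈ L ∧ θ.imp ψ ∈ L

/-- A Kripke model. -/
structure KripkeModel where
  W : Type
  nonempty : Nonempty W
  rel : W → W → Prop
  val : W → ℕ → Prop

/-- Satisfaction in a Kripke model. -/
def KripkeModel.Sat (M : KripkeModel) : Formula → M.W → Prop
  | .var p, w => M.val w p
  | .bot, _ => False
  | .imp φ ψ, w => M.Sat φ w → M.Sat ψ w
  | .box φ, w => ∀ x, M.rel w x → M.Sat φ x

/-- A (P,Q)-formula: v⁺(φ) ⊆ P and v⁻(φ) ⊆ Q. -/
def PQFormula (P Q : Finset ℕ) (φ : Formula) : Prop := φ.vpos ⊆ P ∧ φ.vneg ⊆ Q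

/-- `F n P Q` is a finite list of (P,Q)-formulas of modal depth ≤ n such that every
(P,Q)-formula of modal depth ≤ n is K-provably equivalent to some member. -/
def IsFamily (F : ℕ → Finset ℕ → Finset ℕ → List Formula) : Prop :=
  ∀ (n : ℕ) (P Q : Finset ℕ),
    (∀ φ ∈ F n P Q, PQFormula P Q φ ∧ φ.depth ≤ n) ∧
    ∀ ψ : Formula, PQFormula P Q ψ → ψ.depth ≤ n →
      ∃ φ ∈ F n P Q, Formula.iff φ ψ ∈ TheoryK

/-- Th_n^{(P,Q)}(w) = {φ ∈ F_n^{(P,Q)} : w ⊩ φ}. -/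
def Th (F : ℕ → Finset ℕ → Finset ℕ → List Formula) (M : KripkeModel)
    (n : ℕ) (P Q : Finset ℕ) (w : M.W) : Set Formula :=
  {φ | φ ∈ F n P Q ∧ M.Sat φ w}

def conjList : List Formula → Formula
  | [] => Formula.top
  | φ :: l => φ.and (conjList l)

open Classical in
/-- C_n^{(P,Q)}(w) = ⋀ Th_n^{(P,Q)}(w). -/
noncomputable def Cfml (F : ℕ → Finset ℕ → Finset ℕ → List Formula) (M : KripkeModel)
    (n : ℕ) (P Q : Finset ℕ) (w : M.W) : Formula :=
  conjList ((F n P Q).filter fun φ => decide (M.Sat φ w))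

/-- Layered (P,Q)-bisimulation between M and M'. -/
def LayeredBisim (P Q : Finset ℕ) (M M' : KripkeModel)
    (Z : M.W → ℕ → M'.W → Prop) : Prop :=
  (∀ w n w', Z w n w' →
    (∀ p ∈ P, M.val w p → M'.val w' p) ∧ (∀ q ∈ Q, ¬M.val w q → ¬M'.val w' q)) ∧
  (∀ w n w', Z w (n + 1) w' → ∀ x, M.rel w x → ∃ x', M'.rel w' x' ∧ Z x n x') ∧
  (∀ w n w', Z w (n + 1) w' → ∀ x', M'.rel w' x' → ∃ x, M.rel w x ∧ Z x n x')

/-- Downward closedness of a layered bisimulation. -/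
def DownClosed (M M' : KripkeModel) (Z : M.W → ℕ → M'.W → Prop) : Prop :=
  ∀ w n w', Z w n w' → ∀ m ≤ n, Z w m w'

/-- A class of Kripke models has ULIP. -/
def ClassULIP (F : ℕ → Finset ℕ → Finset ℕ → List Formula) (Cl : Set KripkeModel) : Prop :=
  ∀ P1 P2 P3 Q1 Q2 Q3 : Finset ℕ,
    Disjoint P1 P2 → Disjoint P1 P3 → Disjoint P2 P3 →
    Disjoint Q1 Q2 → Disjoint Q1 Q3 → Disjoint Q2 Q3 →
    ∀ M : KripkeModel, M ∈ Cl → ∀ M' : KripkeModel, M' ∈ Cl →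
    ∀ w : M.W, ∀ w' : M'.W, ∀ m n : ℕ,
      Th F M n P2 Q2 w ⊆ Th F M' n P2 Q2 w' →
      ∃ Mst : KripkeModel, Mst ∈ Cl ∧ ∃ wst : Mst.W,
        Th F M n (P1 ∪ P2) (Q1 ∪ Q2) w ⊆ Th F Mst n (P1 ∪ P2) (Q1 ∪ Q2) wst ∧
        Th F Mst m (P2 ∪ P3) (Q2 ∪ Q3) wst ⊆ Th F M' m (P2 ∪ P3) (Q2 ∪ Q3) w'

/-- L is locally tabular: for every finite set R of variables there are only finitely
many formulas built from variables in R up to L-provable equivalence. -/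
def LocallyTabular (L : Set Formula) : Prop :=
  ∀ R : Finset ℕ, ∃ S : List Formula,
    ∀ ψ : Formula, ψ.vars ⊆ R → ∃ δ ∈ S, Formula.iff δ ψ ∈ L

/-
Let `Σ` be the set of formulas `θ` with `v⁺(θ) ⊆ v⁺(φ) ∖ P`, `v⁻(θ) ⊆ v⁻(φ) ∖ Q` and `L ⊢ φ → θ`.
All of them are built from the variables of `φ`, so by local tabularity `Σ` has a finite subset `T`
meeting every `L`-equivalence class that meets `Σ`; the uniform interpolant is `⋀ T`. If
`L ⊢ φ → ψ` with `ψ` avoiding `P` positively and `Q` negatively, a Lyndon interpolant of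
`φ → ψ` lies in `Σ`, hence is equivalent to a conjunct of `⋀ T`, so `L ⊢ ⋀ T → ψ`.
-/

namespace IsNormal

variable {L : Set Formula}

lemma imp_trans (hL : IsNormal L) {a b c : Formula}
    (hab : a.imp b ∈ L) (hbc : b.imp c ∈ L) : a.imp c ∈ L := by
  refine hL.mp _ _ (hL.mp _ _ (hL.taut ((a.imp b).imp ((b.imp c).imp (a.imp c))) ?_) hab) hbc
  intro v _ hi
  simp only [hi]
  cases v a <;> cases v b <;> cases v c <;> rfl

lemma imp_top (hL : IsNormal L) (a : Formula) : a.imp Formula.top ∈ L := by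
  refine hL.taut _ fun v hb hi => ?_
  simp [Formula.top, Formula.neg, hi, hb]

lemma imp_and (hL : IsNormal L) {a b c : Formula}
    (hab : a.imp b ∈ L) (hac : a.imp c ∈ L) : a.imp (b.and c) ∈ L := by
  refine hL.mp _ _ (hL.mp _ _ (hL.taut ((a.imp b).imp ((a.imp c).imp (a.imp (b.and c)))) ?_)
    hab) hac
  intro v hb hi
  simp only [Formula.and, Formula.neg, hi, hb]
  cases v a <;> cases v b <;> cases v c <;> rfl

lemma and_imp_left (hL : IsNormal L) (a b : Formula) : (a.and b).imp a ∈ L := by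
  refine hL.taut _ fun v hb hi => ?_
  simp only [Formula.and, Formula.neg, hi, hb]
  cases v a <;> cases v b <;> rfl

lemma and_imp_right (hL : IsNormal L) (a b : Formula) : (a.and b).imp b ∈ L := by
  refine hL.taut _ fun v hb hi => ?_
  simp only [Formula.and, Formula.neg, hi, hb]
  cases v a <;> cases v b <;> rfl

lemma iff_mp (hL : IsNormal L) {a b : Formula} (h : a.iff b ∈ L) : a.imp b ∈ L :=
  hL.mp _ _ (hL.and_imp_left _ _) h

lemma iff_mpr (hL : IsNormal L) {a b : Formula} (h : a.iff b ∈ L) : b.imp a ∈ L :=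
  hL.mp _ _ (hL.and_imp_right _ _) h

lemma imp_conjList (hL : IsNormal L) {a : Formula} {l : List Formula}
    (h : ∀ b ∈ l, a.imp b ∈ L) : a.imp (conjList l) ∈ L := by
  induction l with
  | nil => exact hL.imp_top a
  | cons b l ih =>
    exact hL.imp_and (h b List.mem_cons_self) (ih fun c hc => h c (List.mem_cons_of_mem b hc))

lemma conjList_imp (hL : IsNormal L) {a : Formula} {l : List Formula} (h : a ∈ l) :
    (conjList l).imp a ∈ L := by
  induction l with
  | nil => cases h
  | cons b l ih =>
    rcases List.mem_cons.1 h with rfl | h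
    · exact hL.and_imp_left _ _
    · exact hL.imp_trans (hL.and_imp_right b (conjList l)) (ih h)

end IsNormal

lemma Formula.vsgn_conjList_subset {l : List Formula} {s : Bool} {T : Finset ℕ}
    (h : ∀ a ∈ l, a.vsgn s ⊆ T) : (conjList l).vsgn s ⊆ T := by
  induction l with
  | nil => cases s <;> simp [conjList, Formula.top, Formula.neg, Formula.vsgn]
  | cons a l ih =>
    have hand : (a.and (conjList l)).vsgn s = a.vsgn s ∪ (conjList l).vsgn s := by
      cases s <;> simp [Formula.and, Formula.neg, Formula.vsgn]
    rw [conjList, hand]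
    exact Finset.union_subset (h a List.mem_cons_self)
      (ih fun b hb => h b (List.mem_cons_of_mem a hb))

lemma LocallyTabular.exists_list_imp {L : Set Formula} (htab : LocallyTabular L)
    (hL : IsNormal L) (R : Finset ℕ) (C : Formula → Prop) (hC : ∀ θ, C θ → θ.vars ⊆ R) :
    ∃ T : List Formula, (∀ θ ∈ T, C θ) ∧ ∀ θ, C θ → ∃ θ' ∈ T, θ'.imp θ ∈ L := by
  classical
  obtain ⟨S, hS⟩ := htab R
  let pick : Formula → Option Formula := fun δ =>
    if h : ∃ θ, C θ ∧ δ.iff θ ∈ L then some h.choose else none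
  have pick_spec {δ θ : Formula} (h : pick δ = some θ) : C θ ∧ δ.iff θ ∈ L := by
    by_cases hδ : ∃ θ, C θ ∧ δ.iff θ ∈ L
    · simp only [pick, dif_pos hδ, Option.some.injEq] at h
      exact h ▸ hδ.choose_spec
    · simp [pick, dif_neg hδ] at h
  refine ⟨S.filterMap pick, fun θ hθ => ?_, fun θ hθ => ?_⟩
  · obtain ⟨δ, -, hδ⟩ := List.mem_filterMap.1 hθ
    exact (pick_spec hδ).1
  · obtain ⟨δ, hδS, hδθ⟩ := hS θ (hC θ hθ)
    have hpick : pick δ = some (⟨θ, hθ, hδθ⟩ : ∃ θ, C θ ∧ δ.iff θ ∈ L).choose := dif_pos _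
    refine ⟨_, List.mem_filterMap.2 ⟨δ, hδS, hpick⟩, ?_⟩
    exact hL.imp_trans (hL.iff_mpr (pick_spec hpick).2) (hL.iff_mp hδθ)

/-- The formulas among which a uniform Lyndon interpolant of `(φ, P, Q)` is the strongest. -/
def IsLyndonConsequence (L : Set Formula) (φ : Formula) (P Q : Finset ℕ) (θ : Formula) : Prop :=
  θ.vpos ⊆ φ.vpos \ P ∧ θ.vneg ⊆ φ.vneg \ Q ∧ φ.imp θ ∈ L

namespace IsLyndonConsequence

variable {L : Set Formula} {φ θ : Formula} {P Q : Finset ℕ}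

lemma vars_subset (h : IsLyndonConsequence L φ P Q θ) : θ.vars ⊆ φ.vars :=
  Finset.union_subset_union (h.1.trans Finset.sdiff_subset) (h.2.1.trans Finset.sdiff_subset)

lemma conjList (hL : IsNormal L) {T : List Formula}
    (hT : ∀ θ ∈ T, IsLyndonConsequence L φ P Q θ) :
    IsLyndonConsequence L φ P Q (conjList T) :=
  ⟨Formula.vsgn_conjList_subset fun θ h => (hT θ h).1,
    Formula.vsgn_conjList_subset fun θ h => (hT θ h).2.1,
    hL.imp_conjList fun θ h => (hT θ h).2.2⟩

end IsLyndonConsequence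

lemma Finset.subset_sdiff_of_inter_eq_empty {α : Type*} [DecidableEq α] {A B C D : Finset α} (hA : A ⊆ B ∩ C)
    (hC : C ∩ D = ∅) : A ⊆ B \ D := fun x hx =>
  Finset.mem_sdiff.2 ⟨(Finset.mem_inter.1 (hA hx)).1, fun hxD =>
    Finset.notMem_empty x (hC ▸ Finset.mem_inter.2 ⟨(Finset.mem_inter.1 (hA hx)).2, hxD⟩)⟩

lemma LIP.exists_lyndonConsequence_imp {L : Set Formula} (hlip : LIP L) {φ ψ : Formula}
    {P Q : Finset ℕ} (hP : ψ.vpos ∩ P = ∅) (hQ : ψ.vneg ∩ Q = ∅) (h : φ.imp ψ ∈ L) :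
    ∃ θ, IsLyndonConsequence L φ P Q θ ∧ θ.imp ψ ∈ L := by
  obtain ⟨θ, hpos, hneg, hφθ, hθψ⟩ := hlip φ ψ h
  exact ⟨θ, ⟨Finset.subset_sdiff_of_inter_eq_empty hpos hP,
    Finset.subset_sdiff_of_inter_eq_empty hneg hQ, hφθ⟩, hθψ⟩

/-- A locally tabular normal modal logic with LIP enjoys ULIP. -/
theorem locally_tabular_lip_ulip (L : Set Formula) (hL : IsNormal L)
    (htab : LocallyTabular L) (hlip : LIP L) : ULIP L := by
  intro φ P Q
  obtain ⟨T, hTcons, hTimp⟩ := htab.exists_list_imp hL φ.vars (IsLyndonConsequence L φ P Q)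
    fun _ hθ => hθ.vars_subset
  obtain ⟨hpos, hneg, hφ⟩ := IsLyndonConsequence.conjList hL hTcons
  refine ⟨conjList T, hpos, hneg, hφ, fun ψ hP hQ hφψ => ?_⟩
  obtain ⟨θ, hθ, hθψ⟩ := hlip.exists_lyndonConsequence_imp hP hQ hφψ
  obtain ⟨θ', hθ'T, hθ'θ⟩ := hTimp θ hθ
  exact hL.imp_trans (hL.imp_trans (hL.conjList_imp hθ'T) hθ'θ) hθψ
end

section
/- Let X be a set of constant modal formulas (formulas φ with v(φ)=∅) and let L be a normal modal logic enjoying ULIP. Then L + X enjoys ULIP; moreover, every uniform Lyndon interpolant of (φ,P,Q) in L is also a uniform Lyndon interpolant of (φ,P,Q) in L + X. -/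
/-! Every theorem of `L + X` is derivable in `L` from a single constant theorem `γ` of `L + X`:
the formulas `α` with `L ⊢ γ → α` for such a `γ` already form a normal logic, because
substitution fixes constant formulas. Hence if `L + X ⊢ φ → ψ`, then `L ⊢ φ → (γ → ψ)`,
and `γ → ψ` has the same positive and negative variables as `ψ`, so an interpolant `θ` of `φ`
in `L` gives `L ⊢ θ → (γ → ψ)`, whence `L + X ⊢ θ → ψ`. -/

namespace Formula

lemma vars_imp (φ ψ : Formula) : (φ.imp ψ).vars = φ.vars ∪ ψ.vars := by
  ext p
  simp only [vars, vpos, vneg, vsgn, Bool.not_true, Bool.not_false, Finset.mem_union]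
  tauto

lemma vars_and (φ ψ : Formula) : (φ.and ψ).vars = φ.vars ∪ ψ.vars := by
  simp [Formula.and, neg, vars_imp, show bot.vars = ∅ from rfl]

lemma vars_top : top.vars = ∅ := rfl

lemma subst_eq_self_of_vars_eq_empty (σ : ℕ → Formula) {φ : Formula} (hφ : φ.vars = ∅) :
    φ.subst σ = φ := by
  induction φ with
  | var p => simp [vars, vpos, vneg, vsgn] at hφ
  | bot => rfl
  | imp φ ψ ihφ ihψ =>
    rw [vars_imp, Finset.union_eq_empty] at hφ
    rw [subst, ihφ hφ.1, ihψ hφ.2]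
  | box φ ih => rw [subst, ih hφ]

lemma vpos_imp_of_vars_eq_empty {γ : Formula} (hγ : γ.vars = ∅) (ψ : Formula) :
    (γ.imp ψ).vpos = ψ.vpos := by
  rw [vars, Finset.union_eq_empty] at hγ
  show γ.vneg ∪ ψ.vpos = ψ.vpos
  rw [hγ.2, Finset.empty_union]

lemma vneg_imp_of_vars_eq_empty {γ : Formula} (hγ : γ.vars = ∅) (ψ : Formula) :
    (γ.imp ψ).vneg = ψ.vneg := by
  rw [vars, Finset.union_eq_empty] at hγ
  show γ.vpos ∪ ψ.vneg = ψ.vneg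
  rw [hγ.1, Finset.empty_union]

end Formula

open Formula

namespace IsNormal

variable {L : Set Formula}

lemma mem_of_tautology_imp (hL : IsNormal L) {A B : Formula} (h : Tautology (A.imp B))
    (hA : A ∈ L) : B ∈ L :=
  hL.mp _ _ (hL.taut _ h) hA

lemma mem_of_tautology_imp₂ (hL : IsNormal L) {A B C : Formula}
    (h : Tautology (A.imp (B.imp C))) (hA : A ∈ L) (hB : B ∈ L) : C ∈ L :=
  hL.mp _ _ (hL.mem_of_tautology_imp h hA) hB

lemma top_mem (hL : IsNormal L) : top ∈ L :=
  hL.taut _ fun _ hbot himp => by simp [top, neg, himp, hbot]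

lemma imp_mem_of_mem (hL : IsNormal L) {A : Formula} (B : Formula) (hA : A ∈ L) :
    B.imp A ∈ L :=
  hL.mem_of_tautology_imp
    (fun v _ himp => by simp only [himp]; cases v A <;> cases v B <;> rfl) hA

lemma imp_swap_mem (hL : IsNormal L) {A B C : Formula} (h : A.imp (B.imp C) ∈ L) :
    B.imp (A.imp C) ∈ L :=
  hL.mem_of_tautology_imp
    (fun v _ himp => by simp only [himp]; cases v A <;> cases v B <;> cases v C <;> rfl) h

lemma and_mem (hL : IsNormal L) {A B : Formula} (hA : A ∈ L) (hB : B ∈ L) : A.and B ∈ L :=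
  hL.mem_of_tautology_imp₂ (fun v hbot himp => by
    simp only [Formula.and, neg, himp, hbot]; cases v A <;> cases v B <;> rfl) hA hB

lemma and_imp_mem_of_imp_mem (hL : IsNormal L) {A B C D : Formula}
    (hAB : A.imp (B.imp C) ∈ L) (hD : D.imp B ∈ L) : (A.and D).imp C ∈ L :=
  hL.mem_of_tautology_imp₂ (fun v hbot himp => by
    simp only [Formula.and, neg, himp, hbot]
    cases v A <;> cases v B <;> cases v C <;> cases v D <;> rfl) hAB hD

lemma box_imp_box_mem (hL : IsNormal L) {A B : Formula} (h : A.imp B ∈ L) :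
    A.box.imp B.box ∈ L := by
  have hK := hL.subst_mem _ hL.axK fun n => if n = 0 then A else B
  exact hL.mp _ _ hK (hL.nec _ h)

end IsNormal

lemma isNormal_normalExt (Y : Set Formula) : IsNormal (NormalExt Y) where
  taut φ hφ _ hM := hM.1.taut φ hφ
  axK _ hM := hM.1.axK
  mp φ ψ hφψ hφ M hM := hM.1.mp φ ψ (hφψ M hM) (hφ M hM)
  nec φ hφ M hM := hM.1.nec φ (hφ M hM)
  subst_mem φ hφ σ M hM := hM.1.subst_mem φ (hφ M hM) σ

lemma subset_normalExt (Y : Set Formula) : Y ⊆ NormalExt Y :=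
  fun _ hχ _ hM => hM.2 hχ

lemma normalExt_subset {Y M : Set Formula} (hM : IsNormal M) (hYM : Y ⊆ M) :
    NormalExt Y ⊆ M :=
  fun _ hα => hα M ⟨hM, hYM⟩

def ConstGuarded (L M : Set Formula) : Set Formula :=
  {α | ∃ γ : Formula, γ.vars = ∅ ∧ γ ∈ M ∧ γ.imp α ∈ L}

lemma isNormal_constGuarded {L M : Set Formula} (hL : IsNormal L) (hM : IsNormal M) :
    IsNormal (ConstGuarded L M) where
  taut φ hφ := ⟨top, vars_top, hM.top_mem, hL.imp_mem_of_mem _ (hL.taut φ hφ)⟩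
  axK := ⟨top, vars_top, hM.top_mem, hL.imp_mem_of_mem _ hL.axK⟩
  mp := by
    rintro φ ψ ⟨γ, hγ, hγM, hγL⟩ ⟨δ, hδ, hδM, hδL⟩
    exact ⟨γ.and δ, by rw [vars_and, hγ, hδ, Finset.empty_union], hM.and_mem hγM hδM,
      hL.and_imp_mem_of_imp_mem hγL hδL⟩
  nec := by
    rintro φ ⟨γ, hγ, hγM, hγL⟩
    exact ⟨γ.box, hγ, hM.nec _ hγM, hL.box_imp_box_mem hγL⟩
  subst_mem := by
    rintro φ ⟨γ, hγ, hγM, hγL⟩ σ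
    refine ⟨γ, hγ, hγM, ?_⟩
    simpa only [subst, subst_eq_self_of_vars_eq_empty σ hγ] using hL.subst_mem _ hγL σ

lemma exists_constant_imp_of_mem_normalExt {L X : Set Formula} (hL : IsNormal L)
    (hX : ∀ χ ∈ X, χ.vars = ∅) {α : Formula} (hα : α ∈ NormalExt (L ∪ X)) :
    ∃ γ : Formula, γ.vars = ∅ ∧ γ ∈ NormalExt (L ∪ X) ∧ γ.imp α ∈ L := by
  have hN := isNormal_normalExt (L ∪ X)
  refine normalExt_subset (isNormal_constGuarded hL hN) ?_ hα
  rintro χ (hχ | hχ)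
  · exact ⟨top, vars_top, hN.top_mem, hL.imp_mem_of_mem _ hχ⟩
  · exact ⟨χ, hX χ hχ, subset_normalExt _ (Or.inr hχ),
      hL.taut _ fun v _ himp => by simp only [himp]; cases v χ <;> rfl⟩

lemma IsULInterpolant.normalExt_union {L X : Set Formula} (hL : IsNormal L)
    (hX : ∀ χ ∈ X, χ.vars = ∅) {φ θ : Formula} {P Q : Finset ℕ}
    (hθ : IsULInterpolant L φ P Q θ) : IsULInterpolant (NormalExt (L ∪ X)) φ P Q θ := by
  obtain ⟨hpos, hneg, hφθ, hleast⟩ := hθ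
  have hLN : L ⊆ NormalExt (L ∪ X) := Set.subset_union_left.trans (subset_normalExt _)
  refine ⟨hpos, hneg, hLN hφθ, fun ψ hψP hψQ hφψ => ?_⟩
  obtain ⟨γ, hγ, hγN, hγL⟩ := exists_constant_imp_of_mem_normalExt hL hX hφψ
  have hθγψ : θ.imp (γ.imp ψ) ∈ L :=
    hleast _ (by rwa [vpos_imp_of_vars_eq_empty hγ]) (by rwa [vneg_imp_of_vars_eq_empty hγ])
      (hL.imp_swap_mem hγL)
  exact (isNormal_normalExt _).mp _ _ (hLN (hL.imp_swap_mem hθγψ)) hγN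

/-- Extending a normal modal logic with ULIP by constant axioms preserves ULIP,
and uniform Lyndon interpolants are preserved. -/
theorem ulip_constant_extension (L X : Set Formula) (hL : IsNormal L)
    (hX : ∀ χ ∈ X, Formula.vars χ = ∅) (h : ULIP L) :
    ULIP (NormalExt (L ∪ X)) ∧
      ∀ (φ : Formula) (P Q : Finset ℕ) (θ : Formula),
        IsULInterpolant L φ P Q θ → IsULInterpolant (NormalExt (L ∪ X)) φ P Q θ :=
  ⟨fun φ P Q => (h φ P Q).imp fun _ hθ => hθ.normalExt_union hL hX,
    fun _ _ _ _ hθ => hθ.normalExt_union hL hX⟩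
end

section
/- The class of all Kripke models has ULIP. -/
/-! If the depth-`n` `(P₂,Q₂)`-theory of `w` is contained in that of `w'`, the relation
"the depth-`k` `(P₂,Q₂)`-theory of `x` is contained in that of `x'`" is a layered
`(P₂,Q₂)`-bisimulation: since each depth has only finitely many formulas up to equivalence, a
successor's theory is captured by a single formula `◇ Cfml` or refuted by a single `□ ⋁`.
Unravelling `M` and `M'` along it gives an amalgam whose worlds `(x, k, x')` take the
`(P₁ ∪ P₂)`-facts of `x` together with the `(Q₂ ∪ Q₃)`-facts of `x'`, and which continues as a
copy of `M'` once the index `k` is exhausted. The left projection is then a layered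
`(P₁ ∪ P₂, Q₁ ∪ Q₂)`-bisimulation from `M`, the right projection an unbounded
`(P₂ ∪ P₃, Q₂ ∪ Q₃)`-bisimulation to `M'`, and layered bisimulations preserve
`(P,Q)`-formulas of bounded depth. -/

def disjList : List Formula → Formula
  | [] => Formula.bot
  | φ :: l => φ.neg.imp (disjList l)

section Polarity

variable {P Q : Finset ℕ} {φ ψ : Formula} {p n : ℕ}

@[simp] lemma pqFormula_var : PQFormula P Q (.var p) ↔ p ∈ P := by
  simp [PQFormula, Formula.vpos, Formula.vneg, Formula.vsgn]

@[simp] lemma pqFormula_bot : PQFormula P Q .bot := by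
  simp [PQFormula, Formula.vpos, Formula.vneg, Formula.vsgn]

@[simp] lemma pqFormula_imp : PQFormula P Q (φ.imp ψ) ↔ PQFormula Q P φ ∧ PQFormula P Q ψ := by
  simp only [PQFormula, Formula.vpos, Formula.vneg, Formula.vsgn, Bool.not_true, Bool.not_false,
    Finset.union_subset_iff]
  tauto

@[simp] lemma pqFormula_box : PQFormula P Q φ.box ↔ PQFormula P Q φ := Iff.rfl

@[simp] lemma pqFormula_neg : PQFormula P Q φ.neg ↔ PQFormula Q P φ := by
  simp [Formula.neg]

@[simp] lemma pqFormula_and : PQFormula P Q (φ.and ψ) ↔ PQFormula P Q φ ∧ PQFormula P Q ψ := by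
  simp [Formula.and]

@[simp] lemma pqFormula_dia : PQFormula P Q φ.dia ↔ PQFormula P Q φ := by
  simp [Formula.dia]

lemma pqFormula_conjList {l : List Formula} (h : ∀ φ ∈ l, PQFormula P Q φ) :
    PQFormula P Q (conjList l) := by
  induction l with
  | nil => simp [conjList, Formula.top]
  | cons φ l ih => simp_all [conjList]

lemma pqFormula_disjList {l : List Formula} (h : ∀ φ ∈ l, PQFormula P Q φ) :
    PQFormula P Q (disjList l) := by
  induction l with
  | nil => simp [disjList]
  | cons φ l ih => simp_all [disjList]

@[simp] lemma depth_neg : φ.neg.depth = φ.depth := by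
  simp [Formula.neg, Formula.depth]

@[simp] lemma depth_and : (φ.and ψ).depth = max φ.depth ψ.depth := by
  simp [Formula.and, Formula.depth]

@[simp] lemma depth_dia : φ.dia.depth = φ.depth + 1 := by
  simp [Formula.dia, Formula.depth]

lemma depth_conjList_le {l : List Formula} (h : ∀ φ ∈ l, φ.depth ≤ n) :
    (conjList l).depth ≤ n := by
  induction l with
  | nil => simp [conjList, Formula.top, Formula.depth]
  | cons φ l ih => simp_all [conjList]

lemma depth_disjList_le {l : List Formula} (h : ∀ φ ∈ l, φ.depth ≤ n) :
    (disjList l).depth ≤ n := by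
  induction l with
  | nil => simp [disjList, Formula.depth]
  | cons φ l ih => simp_all [disjList, Formula.depth]

end Polarity

namespace KripkeModel

variable (M : KripkeModel) {φ ψ : Formula} {w : M.W}

@[simp] lemma sat_bot : ¬M.Sat .bot w := id

@[simp] lemma sat_imp : M.Sat (φ.imp ψ) w ↔ (M.Sat φ w → M.Sat ψ w) := Iff.rfl

@[simp] lemma sat_box : M.Sat φ.box w ↔ ∀ x, M.rel w x → M.Sat φ x := Iff.rfl

@[simp] lemma sat_neg : M.Sat φ.neg w ↔ ¬M.Sat φ w := Iff.rfl

@[simp] lemma sat_and : M.Sat (φ.and ψ) w ↔ M.Sat φ w ∧ M.Sat ψ w := by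
  simp [Formula.and]

@[simp] lemma sat_dia : M.Sat φ.dia w ↔ ∃ x, M.rel w x ∧ M.Sat φ x := by
  simp [Formula.dia]

lemma sat_conjList {l : List Formula} : M.Sat (conjList l) w ↔ ∀ φ ∈ l, M.Sat φ w := by
  induction l with
  | nil => simp [conjList, Formula.top]
  | cons φ l ih => simp [conjList, ih]

lemma sat_disjList {l : List Formula} : M.Sat (disjList l) w ↔ ∃ φ ∈ l, M.Sat φ w := by
  induction l with
  | nil => simp [disjList]
  | cons φ l ih =>
    simp only [disjList, sat_imp, sat_neg, ih, List.exists_mem_cons_iff, or_iff_not_imp_left]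

def substModel (σ : ℕ → Formula) : KripkeModel :=
  { M with val := fun w p => M.Sat (σ p) w }

lemma sat_subst (σ : ℕ → Formula) (φ : Formula) :
    M.Sat (φ.subst σ) w ↔ (M.substModel σ).Sat φ w := by
  induction φ generalizing w with
  | var p => rfl
  | bot => rfl
  | imp φ ψ ihφ ihψ => exact imp_congr ihφ ihψ
  | box φ ih => exact forall₂_congr fun _ _ => ih

open Classical in
lemma sat_of_tautology (h : Tautology φ) : M.Sat φ w :=
  of_decide_eq_true <| h (fun ψ => decide (M.Sat ψ w)) (by simp) fun ψ θ => by
    by_cases M.Sat ψ w <;> simp [*]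

end KripkeModel

def validFormulas : Set Formula := {φ | ∀ (M : KripkeModel) (w : M.W), M.Sat φ w}

lemma isNormal_validFormulas : IsNormal validFormulas where
  taut _ h M _ := M.sat_of_tautology h
  axK _ _ := by simp only [KripkeModel.sat_imp, KripkeModel.sat_box]; tauto
  mp _ _ hφψ hφ M w := hφψ M w (hφ M w)
  nec _ h M _ x _ := h M x
  subst_mem _ h σ M w := (M.sat_subst σ _).2 (h (M.substModel σ) w)

lemma normalExt_subset_s11 {X L : Set Formula} (hL : IsNormal L) (hX : X ⊆ L) : NormalExt X ⊆ L :=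
  Set.sInter_subset_of_mem ⟨hL, hX⟩

lemma theoryK_subset_validFormulas : TheoryK ⊆ validFormulas :=
  normalExt_subset_s11 isNormal_validFormulas (Set.empty_subset _)

lemma KripkeModel.sat_iff_of_iff_mem_theoryK (M : KripkeModel) {φ ψ : Formula}
    (h : φ.iff ψ ∈ TheoryK) (w : M.W) : M.Sat φ w ↔ M.Sat ψ w := by
  have := theoryK_subset_validFormulas h M w
  simp only [Formula.iff, KripkeModel.sat_and, KripkeModel.sat_imp] at this
  exact ⟨this.1, this.2⟩

def TheoryLE (P Q : Finset ℕ) (M M' : KripkeModel) (x : M.W) (k : ℕ) (x' : M'.W) : Prop :=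
  ∀ φ, PQFormula P Q φ → φ.depth ≤ k → M.Sat φ x → M'.Sat φ x'

section Family

variable {F : ℕ → Finset ℕ → Finset ℕ → List Formula} (hF : IsFamily F)
  {P Q : Finset ℕ} {M M' : KripkeModel} {n k : ℕ} {x : M.W} {x' : M'.W}

lemma sat_Cfml_iff : M'.Sat (Cfml F M n P Q x) x' ↔ Th F M n P Q x ⊆ Th F M' n P Q x' := by
  simp only [Cfml, KripkeModel.sat_conjList, List.mem_filter, decide_eq_true_iff, and_imp]
  exact ⟨fun h φ hφ => ⟨hφ.1, h φ hφ.1 hφ.2⟩, fun h φ hφ hx => (h ⟨hφ, hx⟩).2⟩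

include hF

lemma IsFamily.pqFormula {φ : Formula} (hφ : φ ∈ F n P Q) : PQFormula P Q φ :=
  ((hF n P Q).1 φ hφ).1

lemma IsFamily.depth_le {φ : Formula} (hφ : φ ∈ F n P Q) : φ.depth ≤ n :=
  ((hF n P Q).1 φ hφ).2

lemma theoryLE_iff_Th_subset : TheoryLE P Q M M' x n x' ↔ Th F M n P Q x ⊆ Th F M' n P Q x' := by
  constructor
  · rintro h φ ⟨hφ, hx⟩
    exact ⟨hφ, h φ (hF.pqFormula hφ) (hF.depth_le hφ) hx⟩
  · intro h ψ hψ hd hx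
    obtain ⟨φ, hφ, hφψ⟩ := (hF n P Q).2 ψ hψ hd
    rw [← M.sat_iff_of_iff_mem_theoryK hφψ] at hx
    exact (M'.sat_iff_of_iff_mem_theoryK hφψ x').1 (h ⟨hφ, hx⟩).2

lemma TheoryLE.forth (h : TheoryLE P Q M M' x (k + 1) x') {y : M.W} (hxy : M.rel x y) :
    ∃ y', M'.rel x' y' ∧ TheoryLE P Q M M' y k y' := by
  have hC : PQFormula P Q (Cfml F M k P Q y) :=
    pqFormula_conjList fun φ hφ => hF.pqFormula (List.mem_of_mem_filter hφ)
  have hd : (Cfml F M k P Q y).depth ≤ k :=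
    depth_conjList_le fun φ hφ => hF.depth_le (List.mem_of_mem_filter hφ)
  have hy : M.Sat (Cfml F M k P Q y) y := sat_Cfml_iff.2 subset_rfl
  obtain ⟨y', hxy', hy'⟩ := (M'.sat_dia).1 <|
    h _ (pqFormula_dia.2 hC) (by simpa using hd) ((M.sat_dia).2 ⟨y, hxy, hy⟩)
  exact ⟨y', hxy', (theoryLE_iff_Th_subset hF).2 (sat_Cfml_iff.1 hy')⟩

open Classical in
lemma TheoryLE.back (h : TheoryLE P Q M M' x (k + 1) x') {y' : M'.W} (hxy' : M'.rel x' y') :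
    ∃ y, M.rel x y ∧ TheoryLE P Q M M' y k y' := by
  by_contra! hne
  set Γ := (F k P Q).filter fun φ => ¬M'.Sat φ y'
  have hΓ : PQFormula P Q (disjList Γ) :=
    pqFormula_disjList fun φ hφ => hF.pqFormula (List.mem_of_mem_filter hφ)
  have hd : (disjList Γ).depth ≤ k :=
    depth_disjList_le fun φ hφ => hF.depth_le (List.mem_of_mem_filter hφ)
  have hx : M.Sat (disjList Γ).box x := fun y hxy => by
    obtain ⟨φ, ⟨hφ, hy⟩, hy'⟩ := Set.not_subset.1 (mt (theoryLE_iff_Th_subset hF).2 (hne y hxy))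
    exact M.sat_disjList.2 ⟨φ, List.mem_filter.2 ⟨hφ, decide_eq_true fun h' => hy' ⟨hφ, h'⟩⟩, hy⟩
  obtain ⟨φ, hφ, hy'⟩ := M'.sat_disjList.1 (h (disjList Γ).box hΓ (Nat.succ_le_succ hd) hx y' hxy')
  exact (of_decide_eq_true (List.mem_filter.1 hφ).2 : ¬M'.Sat φ y') hy'

lemma layeredBisim_theoryLE : LayeredBisim P Q M M' (TheoryLE P Q M M') := by
  refine ⟨fun x k x' h => ⟨fun p hp hx => ?_, fun q hq hx => ?_⟩,
    fun _ _ _ h _ => h.forth hF, fun _ _ _ h _ => h.back hF⟩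
  · exact h (.var p) (pqFormula_var.2 hp) (Nat.zero_le k) hx
  · exact h (Formula.var q).neg (by simpa using hq) (by simp [Formula.depth]) hx

end Family

namespace LayeredBisim

variable {P Q : Finset ℕ} {M M' : KripkeModel} {Z : M.W → ℕ → M'.W → Prop}

lemma symm (hZ : LayeredBisim P Q M M' Z) : LayeredBisim Q P M' M (fun x' k x => Z x k x') := by
  obtain ⟨hat, hforth, hback⟩ := hZ
  refine ⟨fun x' k x h => ⟨fun q hq => ?_, fun p hp => ?_⟩,
    fun x' k x h => hback x k x' h, fun x' k x h => hforth x k x' h⟩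
  · exact not_imp_not.1 ((hat x k x' h).2 q hq)
  · exact mt ((hat x k x' h).1 p hp)

lemma theoryLE (hZ : LayeredBisim P Q M M' Z) {x : M.W} {k : ℕ} {x' : M'.W} (h : Z x k x') :
    TheoryLE P Q M M' x k x' := by
  intro φ
  induction φ generalizing P Q M M' Z x k x' with
  | var p => exact fun hp _ hx => (hZ.1 x k x' h).1 p (pqFormula_var.1 hp) hx
  | bot => exact fun _ _ hx => hx
  | imp φ ψ ihφ ihψ =>
    intro hφψ hd hx hφ'
    rw [pqFormula_imp] at hφψ
    rw [Formula.depth, max_le_iff] at hd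
    exact ihψ hZ h hφψ.2 hd.2 (hx (ihφ hZ.symm h hφψ.1 hd.1 hφ'))
  | box φ ih =>
    intro hφ hd hx y' hxy'
    obtain ⟨j, rfl⟩ : ∃ j, k = j + 1 := ⟨k - 1, by rw [Formula.depth] at hd; omega⟩
    obtain ⟨y, hxy, hy⟩ := hZ.2.2 x j x' h y' hxy'
    exact ih hZ hy hφ (Nat.le_of_succ_le_succ hd) (hx y hxy)

end LayeredBisim

section Amalgam

variable (M M' : KripkeModel) (Z : M.W → ℕ → M'.W → Prop)

/-- The index `k` of a triple `(x, k, x')` is the depth still to be matched; from index `0` the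
model continues as a copy of `M'`. -/
def amalgam (P Q : Finset ℕ) : KripkeModel where
  W := {t : M.W × ℕ × M'.W // Z t.1 t.2.1 t.2.2} ⊕ M'.W
  nonempty := ⟨.inr M'.nonempty.some⟩
  rel a b := match a, b with
    | .inl ⟨(x, k, x'), _⟩, .inl ⟨(y, j, y'), _⟩ => k = j + 1 ∧ M.rel x y ∧ M'.rel x' y'
    | .inl ⟨(_, k, x'), _⟩, .inr y' => k = 0 ∧ M'.rel x' y'
    | .inr _, .inl _ => False
    | .inr x', .inr y' => M'.rel x' y'
  val a p := match a with
    | .inl ⟨(x, _, x'), _⟩ => (p ∈ P ∧ M.val x p) ∨ (p ∈ Q ∧ M'.val x' p)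
    | .inr x' => M'.val x' p

variable {M M' Z} {P Q Pl Ql Pr Qr : Finset ℕ}

def amalgamSnd : (amalgam M M' Z Pl Qr).W → M'.W
  | .inl t => t.1.2.2
  | .inr x' => x'

lemma layeredBisim_amalgam_left (hZ : LayeredBisim P Q M M' Z) (hQ : Ql ∩ Qr ⊆ Q) :
    LayeredBisim Pl Ql M (amalgam M M' Z Pl Qr)
      (fun x k a => ∃ x' h, a = .inl ⟨(x, k, x'), h⟩) := by
  refine ⟨?_, ?_, ?_⟩
  · rintro x k _ ⟨x', h, rfl⟩
    refine ⟨fun p hp hx => .inl ⟨hp, hx⟩, fun q hq hx => ?_⟩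
    rintro (⟨-, hx'⟩ | ⟨hqr, hx'⟩)
    · exact hx hx'
    · exact (hZ.1 x k x' h).2 q (hQ (Finset.mem_inter.2 ⟨hq, hqr⟩)) hx hx'
  · rintro x k _ ⟨x', h, rfl⟩ y hxy
    obtain ⟨y', hxy', hy⟩ := hZ.2.1 x k x' h y hxy
    exact ⟨.inl ⟨(y, k, y'), hy⟩, ⟨rfl, hxy, hxy'⟩, y', hy, rfl⟩
  · rintro x k _ ⟨x', h, rfl⟩ (⟨⟨y, j, y'⟩, hy⟩ | y') hrel
    · obtain ⟨hkj, hxy, -⟩ := hrel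
      obtain rfl : k = j := Nat.succ_injective hkj
      exact ⟨y, hxy, y', hy, rfl⟩
    · exact absurd hrel.1 (Nat.succ_ne_zero k)

lemma layeredBisim_amalgam_right (hZ : LayeredBisim P Q M M' Z) (hP : Pl ∩ Pr ⊆ P) :
    LayeredBisim Pr Qr (amalgam M M' Z Pl Qr) M' (fun a _ x' => amalgamSnd a = x') := by
  refine ⟨?_, ?_, ?_⟩
  · rintro (⟨⟨x, k, x'⟩, h⟩ | x') - _ rfl
    · refine ⟨fun p hp => ?_, fun q hq hx hx' => hx (.inr ⟨hq, hx'⟩)⟩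
      rintro (⟨hpl, hx⟩ | ⟨-, hx'⟩)
      · exact (hZ.1 x k x' h).1 p (hP (Finset.mem_inter.2 ⟨hpl, hp⟩)) hx
      · exact hx'
    · exact ⟨fun _ _ => id, fun _ _ => id⟩
  · rintro (⟨⟨x, k, x'⟩, h⟩ | x') - _ rfl (⟨⟨y, j, y'⟩, hy⟩ | y') hrel
    · exact ⟨y', hrel.2.2, rfl⟩
    · exact ⟨y', hrel.2, rfl⟩
    · exact hrel.elim
    · exact ⟨y', hrel, rfl⟩
  · rintro (⟨⟨x, k, x'⟩, h⟩ | x') - _ rfl y' hxy'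
    · cases k with
      | zero => exact ⟨.inr y', ⟨rfl, hxy'⟩, rfl⟩
      | succ j =>
        obtain ⟨y, hxy, hy⟩ := hZ.2.2 x j x' h y' hxy'
        exact ⟨.inl ⟨(y, j, y'), hy⟩, ⟨rfl, hxy, hxy'⟩, rfl⟩
    · exact ⟨.inr y', hxy', rfl⟩

end Amalgam

lemma Finset.union_inter_union_subset_of_disjoint {α : Type*} [DecidableEq α] {s t u : Finset α}
    (h : Disjoint s u) : (s ∪ t) ∩ (t ∪ u) ⊆ t := by
  intro a ha
  have hsu : a ∈ s → a ∉ u := fun has => Finset.disjoint_left.1 h has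
  simp only [Finset.mem_inter, Finset.mem_union] at ha
  tauto

/-- The class of all Kripke models has ULIP. -/
theorem classULIP_all (F : ℕ → Finset ℕ → Finset ℕ → List Formula) (hF : IsFamily F) :
    ClassULIP F Set.univ := by
  intro P1 P2 P3 Q1 Q2 Q3 _ hP13 _ _ hQ13 _ M _ M' _ w w' m n hw
  have hZ := layeredBisim_theoryLE hF (P := P2) (Q := Q2) (M := M) (M' := M')
  rw [← theoryLE_iff_Th_subset hF] at hw
  refine ⟨amalgam M M' (TheoryLE P2 Q2 M M') (P1 ∪ P2) (Q2 ∪ Q3), trivial,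
    .inl ⟨(w, n, w'), hw⟩, (theoryLE_iff_Th_subset hF).1 ?_, (theoryLE_iff_Th_subset hF).1 ?_⟩
  · exact (layeredBisim_amalgam_left hZ
      (Finset.union_inter_union_subset_of_disjoint hQ13)).theoryLE ⟨w', hw, rfl⟩
  · exact (layeredBisim_amalgam_right hZ
      (Finset.union_inter_union_subset_of_disjoint hP13)).theoryLE rfl
end
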